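/- Consider vector fields on an open subset of C⁵ (or R⁵) with coordinates (x₀, x₁, λ, fiber coordinates): L₀ = φ₀ + λφ₁ and L₁ = ∂_{x₀} + α₀ + λ(∂_{x₁} + α₁) + a(λ)∂_λ, where φ₀, φ₁, α₀, α₁ are vector fields tangent to the fibers (independent of λ, pulled back), φ₀ and φ₁ are pointwise linearly independent, and a is a smooth function of (x₀,x₁,λ). If [L₀, L₁] = b·L₀ for some function b, then: (i) b is a polynomial of degree ≤ 2 in λ with coefficients functions of the base, and (ii) a is a polynomial of degree ≤ 3 in λ with coefficients depending only on (x₀,x₁). -/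

import Mathlib

/-- The Lie bracket of vector fields on ℝ⁵, in coordinates. -/
noncomputable def lieB (X Y : (Fin 5 → ℝ) → (Fin 5 → ℝ)) : (Fin 5 → ℝ) → (Fin 5 → ℝ) :=
  fun p => fderiv ℝ Y p (X p) - fderiv ℝ X p (Y p)

/-- `F` depends only on the coordinates in `s`. -/
def dependsOnlyOn {α : Type*} (s : Set (Fin 5)) (F : (Fin 5 → ℝ) → α) : Prop :=
  ∀ p q : Fin 5 → ℝ, (∀ i ∈ s, p i = q i) → F p = F q

/- STATEMENT 6: Coordinates (x₀,x₁,λ,·,·) = (0,1,2,3,4) on ℝ⁵ = M × ℝ_λ, with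
   M → N = ℝ²_{(x₀,x₁)} a bundle with 2-dimensional fibers (coordinates 3,4).
   φ₀,φ₁,α₀,α₁ are λ-independent vertical vector fields with φ₀,φ₁ pointwise
   linearly independent, a = a(x₀,x₁,λ), and
     L₀ = φ₀ + λφ₁,   L₁ = ∂_{x₀} + α₀ + λ(∂_{x₁} + α₁) + a(λ)∂_λ.
   If [L₀,L₁] = b·L₀ then (i) b is a polynomial of degree ≤ 2 in λ with
   λ-independent coefficients, and (ii) a is a polynomial of degree ≤ 3 in λ with
   coefficients depending only on (x₀,x₁). -/
lemma dep_fderiv_zero {E : Type*} [NormedAddCommGroup E] [NormedSpace ℝ E]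
    {s : Set (Fin 5)} {F : (Fin 5 → ℝ) → E}
    (hF : dependsOnlyOn s F)
    (p v : Fin 5 → ℝ) (hd : DifferentiableAt ℝ F p) (hv : ∀ i ∈ s, v i = 0) :
    fderiv ℝ F p v = 0 := by
  have hconst : (fun t : ℝ => F (p + t • v)) = fun _ => F p := by
    funext t
    exact hF _ _ (fun i hi => by simp [hv i hi])
  have hline : HasDerivAt (fun t : ℝ => p + t • v) v 0 := by
    simpa using ((hasDerivAt_id (0:ℝ)).smul_const v).const_add p
  have hF' : HasFDerivAt F (fderiv ℝ F p) (p + (0:ℝ) • v) := by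
    simpa using hd.hasFDerivAt
  have hcomp : HasDerivAt (fun t : ℝ => F (p + t • v)) (fderiv ℝ F p v) 0 :=
    hF'.comp_hasDerivAt 0 hline
  have h0 : HasDerivAt (fun t : ℝ => F (p + t • v)) 0 0 := by
    rw [hconst]; exact hasDerivAt_const _ _
  exact hcomp.unique h0

lemma dep_fderiv_congr {E : Type*} [NormedAddCommGroup E] [NormedSpace ℝ E]
    {s : Set (Fin 5)} {F : (Fin 5 → ℝ) → E}
    (hF : dependsOnlyOn s F) (hd : Differentiable ℝ F)
    (p q : Fin 5 → ℝ) (hpq : ∀ i ∈ s, p i = q i) : fderiv ℝ F p = fderiv ℝ F q := by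
  have hfun : (fun x => F (x + (q - p))) = F := by
    funext x
    exact hF _ _ (fun i hi => by simp [hpq i hi])
  have ht : HasFDerivAt (fun x : Fin 5 → ℝ => x + (q - p)) (ContinuousLinearMap.id ℝ _) p :=
    (hasFDerivAt_id p).add_const _
  have h1 : HasFDerivAt (fun x => F (x + (q - p))) (fderiv ℝ F q) p := by
    have h2 : HasFDerivAt F (fderiv ℝ F q) (p + (q - p)) := by
      simpa using (hd q).hasFDerivAt
    exact h2.comp p ht
  rw [hfun] at h1
  exact h1.fderiv

lemma two_not_mem : (2 : Fin 5) ∉ ({0, 1, 3, 4} : Set (Fin 5)) := by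
  simp

theorem stmt6_key
    (φ₀ φ₁ α₀ α₁ : (Fin 5 → ℝ) → (Fin 5 → ℝ)) (a b : (Fin 5 → ℝ) → ℝ)
    (hφ₀ : ContDiff ℝ (⊤ : ℕ∞) φ₀) (hφ₁ : ContDiff ℝ (⊤ : ℕ∞) φ₁)
    (hα₀ : ContDiff ℝ (⊤ : ℕ∞) α₀) (hα₁ : ContDiff ℝ (⊤ : ℕ∞) α₁)
    (ha : ContDiff ℝ (⊤ : ℕ∞) a)
    (hφ₀vert : ∀ p, φ₀ p 0 = 0 ∧ φ₀ p 1 = 0 ∧ φ₀ p 2 = 0)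
    (hφ₁vert : ∀ p, φ₁ p 0 = 0 ∧ φ₁ p 1 = 0 ∧ φ₁ p 2 = 0)
    (hα₀vert : ∀ p, α₀ p 0 = 0 ∧ α₀ p 1 = 0 ∧ α₀ p 2 = 0)
    (hα₁vert : ∀ p, α₁ p 0 = 0 ∧ α₁ p 1 = 0 ∧ α₁ p 2 = 0)
    (hφ₀dep : dependsOnlyOn ({0, 1, 3, 4} : Set (Fin 5)) φ₀)
    (hφ₁dep : dependsOnlyOn ({0, 1, 3, 4} : Set (Fin 5)) φ₁)
    (hα₀dep : dependsOnlyOn ({0, 1, 3, 4} : Set (Fin 5)) α₀)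
    (hα₁dep : dependsOnlyOn ({0, 1, 3, 4} : Set (Fin 5)) α₁)
    (haN : dependsOnlyOn ({0, 1, 2} : Set (Fin 5)) a)
    (hindep : ∀ p, LinearIndependent ℝ ![φ₀ p, φ₁ p])
    (hlax : ∀ p, lieB (fun q => φ₀ q + q 2 • φ₁ q)
        (fun q => (Pi.single (0 : Fin 5) (1 : ℝ) : Fin 5 → ℝ) + α₀ q
          + q 2 • ((Pi.single (1 : Fin 5) (1 : ℝ) : Fin 5 → ℝ) + α₁ q)
          + a q • (Pi.single (2 : Fin 5) (1 : ℝ) : Fin 5 → ℝ)) p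
      = b p • (φ₀ p + p 2 • φ₁ p)) (p : Fin 5 → ℝ) :
    (∀ t : ℝ, b (Function.update p 2 t)
        = b (Function.update p 2 0)
          + ((b (Function.update p 2 1) - b (Function.update p 2 (-1)))/2) * t
          + ((b (Function.update p 2 1) + b (Function.update p 2 (-1)))/2
              - b (Function.update p 2 0)) * t^2) ∧
    (∀ t : ℝ, a (Function.update p 2 t)
        = a (Function.update p 2 0)
          + ((6*a (Function.update p 2 1) - 2*a (Function.update p 2 (-1))
              - a (Function.update p 2 2) - 3*a (Function.update p 2 0))/6) * t
          + ((a (Function.update p 2 1) + a (Function.update p 2 (-1)))/2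
              - a (Function.update p 2 0)) * t^2
          + ((a (Function.update p 2 2) + 3*a (Function.update p 2 0)
              - 3*a (Function.update p 2 1) - a (Function.update p 2 (-1)))/6) * t^3) := by
  have hmain : ∃ A B C : Fin 5 → ℝ, ∀ t : ℝ,
      b (Function.update p 2 t) • φ₀ p
        + (t * b (Function.update p 2 t) + a (Function.update p 2 t)) • φ₁ p
      = A + t • B + t ^ 2 • C := by
    have hdφ₀ : Differentiable ℝ φ₀ := hφ₀.differentiable (by simp)
    have hdφ₁ : Differentiable ℝ φ₁ := hφ₁.differentiable (by simp)
    have hdα₀ : Differentiable ℝ α₀ := hα₀.differentiable (by simp)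
    have hdα₁ : Differentiable ℝ α₁ := hα₁.differentiable (by simp)
    have hda : Differentiable ℝ a := ha.differentiable (by simp)
    refine ⟨fderiv ℝ α₀ p (φ₀ p)
        - fderiv ℝ φ₀ p (Pi.single (0 : Fin 5) (1 : ℝ)) - fderiv ℝ φ₀ p (α₀ p),
      fderiv ℝ α₀ p (φ₁ p) + fderiv ℝ α₁ p (φ₀ p)
        - fderiv ℝ φ₀ p (Pi.single (1 : Fin 5) (1 : ℝ)) - fderiv ℝ φ₀ p (α₁ p)
        - fderiv ℝ φ₁ p (Pi.single (0 : Fin 5) (1 : ℝ)) - fderiv ℝ φ₁ p (α₀ p),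
      fderiv ℝ α₁ p (φ₁ p)
        - fderiv ℝ φ₁ p (Pi.single (1 : Fin 5) (1 : ℝ)) - fderiv ℝ φ₁ p (α₁ p),
      fun t => ?_⟩
    set q := Function.update p 2 t with hqdef
    have hq2 : q 2 = t := Function.update_self 2 t p
    have hqp : ∀ i ∈ ({0,1,3,4} : Set (Fin 5)), q i = p i := by
      intro i hi
      have hne : i ≠ 2 := fun h => two_not_mem (h ▸ hi)
      exact Function.update_of_ne hne t p
    have hφ0q : φ₀ q = φ₀ p := hφ₀dep q p hqp
    have hφ1q : φ₁ q = φ₁ p := hφ₁dep q p hqp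
    have hα0q : α₀ q = α₀ p := hα₀dep q p hqp
    have hα1q : α₁ q = α₁ p := hα₁dep q p hqp
    have hD0 : fderiv ℝ φ₀ q = fderiv ℝ φ₀ p := dep_fderiv_congr hφ₀dep hdφ₀ q p hqp
    have hD1 : fderiv ℝ φ₁ q = fderiv ℝ φ₁ p := dep_fderiv_congr hφ₁dep hdφ₁ q p hqp
    have hE0 : fderiv ℝ α₀ q = fderiv ℝ α₀ p := dep_fderiv_congr hα₀dep hdα₀ q p hqp
    have hE1 : fderiv ℝ α₁ q = fderiv ℝ α₁ p := dep_fderiv_congr hα₁dep hdα₁ q p hqp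
    -- derivatives of L₀ and L₁ at q
    have hc2 : HasFDerivAt (fun x : Fin 5 → ℝ => x 2)
        (ContinuousLinearMap.proj (R := ℝ) (φ := fun _ : Fin 5 => ℝ) 2) q :=
      (ContinuousLinearMap.proj (R := ℝ) (φ := fun _ : Fin 5 => ℝ) 2).hasFDerivAt
    have hL0 : HasFDerivAt (fun x => φ₀ x + x 2 • φ₁ x)
        (fderiv ℝ φ₀ q + (q 2 • fderiv ℝ φ₁ q
          + (ContinuousLinearMap.proj (R := ℝ) (φ := fun _ : Fin 5 => ℝ) 2).smulRight (φ₁ q))) q :=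
      ((hdφ₀ q).hasFDerivAt).add (hc2.smul (hdφ₁ q).hasFDerivAt)
    have hL1 : HasFDerivAt (fun x => (Pi.single (0 : Fin 5) (1 : ℝ) : Fin 5 → ℝ) + α₀ x
          + x 2 • ((Pi.single (1 : Fin 5) (1 : ℝ) : Fin 5 → ℝ) + α₁ x)
          + a x • (Pi.single (2 : Fin 5) (1 : ℝ) : Fin 5 → ℝ))
        (((0 + fderiv ℝ α₀ q) + (q 2 • (0 + fderiv ℝ α₁ q)
            + (ContinuousLinearMap.proj (R := ℝ) (φ := fun _ : Fin 5 => ℝ) 2).smulRight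
              ((Pi.single (1 : Fin 5) (1 : ℝ) : Fin 5 → ℝ) + α₁ q)))
          + (a q • 0 + (fderiv ℝ a q).smulRight (Pi.single (2 : Fin 5) (1 : ℝ) : Fin 5 → ℝ))) q :=
      (((hasFDerivAt_const _ q).add (hdα₀ q).hasFDerivAt).add
        (hc2.smul ((hasFDerivAt_const _ q).add (hdα₁ q).hasFDerivAt))).add
        ((hda q).hasFDerivAt.smul (hasFDerivAt_const _ q))
    have hbr := hlax q
    simp only [lieB] at hbr
    rw [hL0.fderiv, hL1.fderiv] at hbr
    -- vanishing facts
    have hvert0 : ∀ i ∈ ({0,1,2} : Set (Fin 5)), (φ₀ q + q 2 • φ₁ q) i = 0 := by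
      intro i hi
      simp only [Set.mem_insert_iff, Set.mem_singleton_iff] at hi
      rcases hi with rfl | rfl | rfl <;>
        simp [(hφ₀vert q).1, (hφ₀vert q).2.1, (hφ₀vert q).2.2,
          (hφ₁vert q).1, (hφ₁vert q).2.1, (hφ₁vert q).2.2]
    have hfa : fderiv ℝ a q (φ₀ q + q 2 • φ₁ q) = 0 :=
      dep_fderiv_zero haN q _ (hda q) hvert0
    have hsingle2 : ∀ i ∈ ({0,1,3,4} : Set (Fin 5)),
        (Pi.single (2 : Fin 5) (1 : ℝ) : Fin 5 → ℝ) i = 0 := by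
      intro i hi
      have hne : i ≠ 2 := fun h => two_not_mem (h ▸ hi)
      exact Pi.single_eq_of_ne hne 1
    have hD0e2 : fderiv ℝ φ₀ q (Pi.single (2 : Fin 5) (1 : ℝ)) = 0 :=
      dep_fderiv_zero hφ₀dep q _ (hdφ₀ q) hsingle2
    have hD1e2 : fderiv ℝ φ₁ q (Pi.single (2 : Fin 5) (1 : ℝ)) = 0 :=
      dep_fderiv_zero hφ₁dep q _ (hdφ₁ q) hsingle2
    -- the λ-component of L₀ q and of L₁ q
    have hL0q2 : (φ₀ q + q 2 • φ₁ q) 2 = 0 := hvert0 2 (by simp)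
    have hL1q2 : ((Pi.single (0 : Fin 5) (1 : ℝ) : Fin 5 → ℝ) + α₀ q
        + q 2 • ((Pi.single (1 : Fin 5) (1 : ℝ) : Fin 5 → ℝ) + α₁ q)
        + a q • (Pi.single (2 : Fin 5) (1 : ℝ) : Fin 5 → ℝ)) 2 = a q := by
      simp [(hα₀vert q).2.2, (hα₁vert q).2.2, Pi.single_eq_of_ne]
    simp only [ContinuousLinearMap.add_apply, ContinuousLinearMap.coe_smul', Pi.smul_apply,
      ContinuousLinearMap.smulRight_apply, ContinuousLinearMap.proj_apply,
      ContinuousLinearMap.zero_apply, map_add, map_smul] at hbr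
    have hvert1 : ∀ i ∈ ({0,1,2} : Set (Fin 5)), φ₀ q i = 0 := by
      intro i hi
      simp only [Set.mem_insert_iff, Set.mem_singleton_iff] at hi
      rcases hi with rfl | rfl | rfl
      exacts [(hφ₀vert q).1, (hφ₀vert q).2.1, (hφ₀vert q).2.2]
    have hvert2 : ∀ i ∈ ({0,1,2} : Set (Fin 5)), φ₁ q i = 0 := by
      intro i hi
      simp only [Set.mem_insert_iff, Set.mem_singleton_iff] at hi
      rcases hi with rfl | rfl | rfl
      exacts [(hφ₁vert q).1, (hφ₁vert q).2.1, (hφ₁vert q).2.2]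
    have hfa0 : fderiv ℝ a q (φ₀ q) = 0 := dep_fderiv_zero haN q _ (hda q) hvert1
    have hfa1 : fderiv ℝ a q (φ₁ q) = 0 := dep_fderiv_zero haN q _ (hda q) hvert2
    have hs0 : (Pi.single (0 : Fin 5) (1 : ℝ) : Fin 5 → ℝ) 2 = 0 := by simp
    have hs1 : (Pi.single (1 : Fin 5) (1 : ℝ) : Fin 5 → ℝ) 2 = 0 := by simp
    have hs2 : (Pi.single (2 : Fin 5) (1 : ℝ) : Fin 5 → ℝ) 2 = 1 := by simp
    rw [hfa0, hfa1, hD0e2, hD1e2, (hφ₀vert q).2.2, (hφ₁vert q).2.2, (hα₀vert q).2.2,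
      (hα₁vert q).2.2, hs0, hs1, hs2, hq2, hφ0q, hφ1q, hα0q, hα1q, hD0, hD1, hE0, hE1] at hbr
    linear_combination (norm := module) -hbr
  obtain ⟨A, B, C, hmain⟩ := hmain
  have hpair : ∀ s t : ℝ, s • φ₀ p + t • φ₁ p = 0 → s = 0 ∧ t = 0 :=
    LinearIndependent.pair_iff.mp (hindep p)
  have key2 : ∀ t : ℝ,
      (b (Function.update p 2 t)
          - ((1 - t^2) * b (Function.update p 2 0)
            + ((t^2+t)/2) * b (Function.update p 2 1)
            + ((t^2-t)/2) * b (Function.update p 2 (-1)))) • φ₀ p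
        + ((t * b (Function.update p 2 t) + a (Function.update p 2 t))
          - ((1 - t^2) * ((0:ℝ) * b (Function.update p 2 0) + a (Function.update p 2 0))
            + ((t^2+t)/2) * ((1:ℝ) * b (Function.update p 2 1) + a (Function.update p 2 1))
            + ((t^2-t)/2) * ((-1:ℝ) * b (Function.update p 2 (-1))
                + a (Function.update p 2 (-1))))) • φ₁ p = 0 := by
    intro t
    have h0 := hmain 0
    have h1 := hmain 1
    have hm := hmain (-1)
    have ht := hmain t
    linear_combination (norm := module) ht - (1 - t^2) • h0 - ((t^2+t)/2) • h1
      - ((t^2-t)/2) • hm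
  have hc : ∀ t : ℝ, _ ∧ _ := fun t => hpair _ _ (key2 t)
  constructor
  · intro t
    linear_combination (hc t).1
  · intro t
    linear_combination (hc t).2 - t * (hc t).1
      - ((t^3 - t)/6) * ((hc 2).2 - 2 * (hc 2).1)

lemma mem_horiz {i : Fin 5} (h : i ≠ 2) : i ∈ ({0, 1, 3, 4} : Set (Fin 5)) := by
  fin_cases i <;> simp_all

theorem stmt_6
    (φ₀ φ₁ α₀ α₁ : (Fin 5 → ℝ) → (Fin 5 → ℝ)) (a b : (Fin 5 → ℝ) → ℝ)
    (hφ₀ : ContDiff ℝ (⊤ : ℕ∞) φ₀) (hφ₁ : ContDiff ℝ (⊤ : ℕ∞) φ₁)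
    (hα₀ : ContDiff ℝ (⊤ : ℕ∞) α₀) (hα₁ : ContDiff ℝ (⊤ : ℕ∞) α₁)
    (ha : ContDiff ℝ (⊤ : ℕ∞) a)
    (hφ₀vert : ∀ p, φ₀ p 0 = 0 ∧ φ₀ p 1 = 0 ∧ φ₀ p 2 = 0)
    (hφ₁vert : ∀ p, φ₁ p 0 = 0 ∧ φ₁ p 1 = 0 ∧ φ₁ p 2 = 0)
    (hα₀vert : ∀ p, α₀ p 0 = 0 ∧ α₀ p 1 = 0 ∧ α₀ p 2 = 0)
    (hα₁vert : ∀ p, α₁ p 0 = 0 ∧ α₁ p 1 = 0 ∧ α₁ p 2 = 0)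
    (hφ₀dep : dependsOnlyOn ({0, 1, 3, 4} : Set (Fin 5)) φ₀)
    (hφ₁dep : dependsOnlyOn ({0, 1, 3, 4} : Set (Fin 5)) φ₁)
    (hα₀dep : dependsOnlyOn ({0, 1, 3, 4} : Set (Fin 5)) α₀)
    (hα₁dep : dependsOnlyOn ({0, 1, 3, 4} : Set (Fin 5)) α₁)
    (haN : dependsOnlyOn ({0, 1, 2} : Set (Fin 5)) a)
    (hindep : ∀ p, LinearIndependent ℝ ![φ₀ p, φ₁ p])
    (hlax : ∀ p, lieB (fun q => φ₀ q + q 2 • φ₁ q)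
        (fun q => (Pi.single (0 : Fin 5) (1 : ℝ) : Fin 5 → ℝ) + α₀ q
          + q 2 • ((Pi.single (1 : Fin 5) (1 : ℝ) : Fin 5 → ℝ) + α₁ q)
          + a q • (Pi.single (2 : Fin 5) (1 : ℝ) : Fin 5 → ℝ)) p
      = b p • (φ₀ p + p 2 • φ₁ p)) :
    (∃ b₀ b₁ b₂ : (Fin 5 → ℝ) → ℝ,
        dependsOnlyOn ({0, 1, 3, 4} : Set (Fin 5)) b₀ ∧
        dependsOnlyOn ({0, 1, 3, 4} : Set (Fin 5)) b₁ ∧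
        dependsOnlyOn ({0, 1, 3, 4} : Set (Fin 5)) b₂ ∧
        ∀ p, b p = b₀ p + b₁ p * p 2 + b₂ p * (p 2) ^ 2) ∧
    (∃ a₀ a₁ a₂ a₃ : (Fin 5 → ℝ) → ℝ,
        dependsOnlyOn ({0, 1} : Set (Fin 5)) a₀ ∧
        dependsOnlyOn ({0, 1} : Set (Fin 5)) a₁ ∧
        dependsOnlyOn ({0, 1} : Set (Fin 5)) a₂ ∧
        dependsOnlyOn ({0, 1} : Set (Fin 5)) a₃ ∧
        ∀ p, a p = a₀ p + a₁ p * p 2 + a₂ p * (p 2) ^ 2 + a₃ p * (p 2) ^ 3) := by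
  have key := stmt6_key φ₀ φ₁ α₀ α₁ a b hφ₀ hφ₁ hα₀ hα₁ ha hφ₀vert hφ₁vert hα₀vert hα₁vert
    hφ₀dep hφ₁dep hα₀dep hα₁dep haN hindep hlax
  have hupd : ∀ p q : Fin 5 → ℝ, (∀ i ∈ ({0, 1, 3, 4} : Set (Fin 5)), p i = q i) →
      ∀ t : ℝ, Function.update p 2 t = Function.update q 2 t := by
    intro p q h t
    funext i
    by_cases hi : i = 2
    · subst hi; simp
    · rw [Function.update_of_ne hi, Function.update_of_ne hi]
      exact h i (mem_horiz hi)
  have hupda : ∀ p q : Fin 5 → ℝ, (∀ i ∈ ({0, 1} : Set (Fin 5)), p i = q i) →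
      ∀ t : ℝ, a (Function.update p 2 t) = a (Function.update q 2 t) := by
    intro p q h t
    apply haN
    intro i hi
    simp only [Set.mem_insert_iff, Set.mem_singleton_iff] at hi
    rcases hi with rfl | rfl | rfl
    · rw [Function.update_of_ne (by decide), Function.update_of_ne (by decide)]
      exact h 0 (by simp)
    · rw [Function.update_of_ne (by decide), Function.update_of_ne (by decide)]
      exact h 1 (by simp)
    · simp
  constructor
  · refine ⟨fun p => b (Function.update p 2 0),
      fun p => (b (Function.update p 2 1) - b (Function.update p 2 (-1)))/2,
      fun p => (b (Function.update p 2 1) + b (Function.update p 2 (-1)))/2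
        - b (Function.update p 2 0), ?_, ?_, ?_, ?_⟩
    · intro p q h; dsimp only; rw [hupd p q h 0]
    · intro p q h; dsimp only; rw [hupd p q h 1, hupd p q h (-1)]
    · intro p q h; dsimp only; rw [hupd p q h 1, hupd p q h (-1), hupd p q h 0]
    · intro p
      have hk := (key p).1 (p 2)
      rwa [Function.update_eq_self] at hk
  · refine ⟨fun p => a (Function.update p 2 0),
      fun p => (6*a (Function.update p 2 1) - 2*a (Function.update p 2 (-1))
        - a (Function.update p 2 2) - 3*a (Function.update p 2 0))/6,
      fun p => (a (Function.update p 2 1) + a (Function.update p 2 (-1)))/2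
        - a (Function.update p 2 0),
      fun p => (a (Function.update p 2 2) + 3*a (Function.update p 2 0)
        - 3*a (Function.update p 2 1) - a (Function.update p 2 (-1)))/6,
      ?_, ?_, ?_, ?_, ?_⟩
    · intro p q h; dsimp only; rw [hupda p q h 0]
    · intro p q h; dsimp only; rw [hupda p q h 1, hupda p q h (-1), hupda p q h 2, hupda p q h 0]
    · intro p q h; dsimp only; rw [hupda p q h 1, hupda p q h (-1), hupda p q h 0]
    · intro p q h; dsimp only; rw [hupda p q h 2, hupda p q h 0, hupda p q h 1, hupda p q h (-1)]
    · intro p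
      have hk := (key p).2 (p 2)
      rwa [Function.update_eq_self] at hk
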